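/- Let G10 be the interlacement graph of the matching { {0,3}, {1,10}, {2,9}, {4,15}, {5,16}, {6,19}, {7,14}, {8,13}, {11,18}, {12,17} } of {0,...,19}, with vertex set {0,...,9} where vertex i corresponds to the i-th chord in the listed order and vertices i, j are adjacent if and only if the corresponding chords are interlaced. Then G10 is connected, every vertex of G10 has even degree, G10 satisfies conditions C2 and B3, and yet G10 fails the STZ condition (there is no diagonal matrix Λ over GF(2) such that M + Λ is idempotent, where M is the adjacency matrix of G10 over GF(2)). -/

import Mathlib

/-!
If `M + Λ` is idempotent over `GF(2)` with `Λ = diag λ`, comparing the `(u, v)` entries for an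
edge `uv` gives `|N(u) ∩ N(v)| + λ_u + λ_v ≡ 1 (mod 2)`. Summing around a 4-cycle cancels `Λ`,
so the codegrees along every 4-cycle have even sum. In `G10` the cycle `1 – 3 – 9 – 7` has odd
codegree sum, so STZ fails, while connectivity, C1, C2 and B3 are finite checks.
-/

/-- Two sorted pairs (chords) are interlaced. -/
def Interlaced (p q : ℕ × ℕ) : Prop :=
  (p.1 < q.1 ∧ q.1 < p.2 ∧ p.2 < q.2) ∨ (q.1 < p.1 ∧ p.1 < q.2 ∧ q.2 < p.2)

/-- Interlacement graph of a tuple of chords: vertex `i` corresponds to the `i`-th chord,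
and two vertices are adjacent iff the corresponding chords are interlaced. -/
def interGraph {n : ℕ} (c : Fin n → ℕ × ℕ) : SimpleGraph (Fin n) where
  Adj i j := i ≠ j ∧ Interlaced (c i) (c j)
  symm := ⟨fun _ _ h => ⟨h.1.symm, Or.symm h.2⟩⟩
  loopless := ⟨fun _ h => h.1 rfl⟩

/-- Condition C1: every vertex has even degree. -/
def CondC1 {V : Type*} (G : SimpleGraph V) : Prop :=
  ∀ v : V, Even (G.neighborSet v).ncard

/-- Condition C2: each pair of distinct non-adjacent vertices has an even number
(possibly zero) of common neighbours. -/
def CondC2 {V : Type*} (G : SimpleGraph V) : Prop :=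
  ∀ u v : V, u ≠ v → ¬ G.Adj u v → Even {w | G.Adj u w ∧ G.Adj v w}.ncard

/-- Condition B3 (Biryukov): for any three pairwise adjacent vertices `a`, `b`, `c`,
the number of vertices `w ∉ {b, c}` adjacent to `a` but to neither `b` nor `c`, plus
the number of vertices `w ≠ a` adjacent to both `b` and `c` but not to `a`, is even. -/
def CondB3 {V : Type*} (G : SimpleGraph V) : Prop :=
  ∀ a b c : V, G.Adj a b → G.Adj a c → G.Adj b c →
    Even ({w | w ≠ b ∧ w ≠ c ∧ G.Adj a w ∧ ¬ G.Adj b w ∧ ¬ G.Adj c w}.ncard +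
          {w | w ≠ a ∧ ¬ G.Adj a w ∧ G.Adj b w ∧ G.Adj c w}.ncard)

open Classical in
/-- Adjacency matrix of a simple graph over `GF(2) = ZMod 2`. -/
noncomputable def adjMat2 {V : Type*} (G : SimpleGraph V) : Matrix V V (ZMod 2) :=
  Matrix.of fun i j => if G.Adj i j then 1 else 0

/-- The Shtylla–Traldi–Zulli condition: there is a diagonal matrix `Λ` over `GF(2)`
such that `M + Λ` is idempotent, where `M` is the adjacency matrix over `GF(2)`. -/
def CondSTZ {V : Type*} [Fintype V] [DecidableEq V] (G : SimpleGraph V) : Prop :=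
  ∃ d : V → ZMod 2,
    (adjMat2 G + Matrix.diagonal d) * (adjMat2 G + Matrix.diagonal d)
      = adjMat2 G + Matrix.diagonal d

/-- The chords of the matching `{{0,3},{1,10},{2,9},{4,15},{5,16},{6,19},{7,14},{8,13},{11,18},{12,17}}`
of `{0, ..., 19}`, in the listed order. -/
def L10chords : Fin 10 → ℕ × ℕ :=
  ![(0, 3), (1, 10), (2, 9), (4, 15), (5, 16), (6, 19), (7, 14), (8, 13), (11, 18), (12, 17)]

/-- The interlacement graph of that matching. -/
def G10 : SimpleGraph (Fin 10) := interGraph L10chords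

instance (p q : ℕ × ℕ) : Decidable (Interlaced p q) :=
  inferInstanceAs (Decidable (_ ∨ _))

instance {n : ℕ} (c : Fin n → ℕ × ℕ) : DecidableRel (interGraph c).Adj :=
  fun i j => inferInstanceAs (Decidable (i ≠ j ∧ Interlaced (c i) (c j)))

instance : DecidableRel G10.Adj := inferInstanceAs (DecidableRel (interGraph L10chords).Adj)

theorem Set.ncard_setOf_eq_card_filter {α : Type*} [Fintype α] (p : α → Prop) [DecidablePred p] :
    {x | p x}.ncard = (Finset.univ.filter p).card := by
  rw [Set.ncard_eq_toFinset_card', Set.toFinset_ofPred]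

theorem adjMat2_eq_adjMatrix {V : Type*} (G : SimpleGraph V) [DecidableRel G.Adj] :
    adjMat2 G = G.adjMatrix (ZMod 2) := by
  ext u v
  simp only [adjMat2, Matrix.of_apply, SimpleGraph.adjMatrix_apply]
  congr

namespace SimpleGraph

variable {V : Type*} {G : SimpleGraph V}

theorem connected_of_forall_reachable_in_two_steps (r : V)
    (h : ∀ v, v = r ∨ G.Adj r v ∨ ∃ u, G.Adj r u ∧ G.Adj u v) : G.Connected := by
  refine (connected_iff_exists_forall_reachable G).2 ⟨r, fun v => ?_⟩
  obtain rfl | hrv | ⟨u, hru, huv⟩ := h v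
  exacts [.rfl, hrv.reachable, hru.reachable.trans huv.reachable]

variable [Fintype V] [DecidableRel G.Adj]

theorem condC1_iff : CondC1 G ↔ ∀ v, Even (Finset.univ.filter (G.Adj v)).card := by
  simp only [CondC1, ← Set.ncard_setOf_eq_card_filter]
  rfl

theorem condC2_iff : CondC2 G ↔ ∀ u v, u ≠ v → ¬ G.Adj u v →
    Even (Finset.univ.filter fun w => G.Adj u w ∧ G.Adj v w).card := by
  simp only [CondC2, Set.ncard_setOf_eq_card_filter]

variable [DecidableEq V]

theorem condB3_iff : CondB3 G ↔ ∀ a b c, G.Adj a b → G.Adj a c → G.Adj b c →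
    Even ((Finset.univ.filter fun w => w ≠ b ∧ w ≠ c ∧ G.Adj a w ∧ ¬ G.Adj b w ∧ ¬ G.Adj c w).card +
      (Finset.univ.filter fun w => w ≠ a ∧ ¬ G.Adj a w ∧ G.Adj b w ∧ G.Adj c w).card) := by
  simp only [CondB3, Set.ncard_setOf_eq_card_filter]

theorem mul_self_adjMatrix_add_diagonal_apply_of_adj (d : V → ZMod 2) {u v : V}
    (huv : G.Adj u v) :
    ((G.adjMatrix (ZMod 2) + Matrix.diagonal d) * (G.adjMatrix (ZMod 2) + Matrix.diagonal d)) u v =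
      (G.adjMatrix (ZMod 2) * G.adjMatrix (ZMod 2)) u v + d u + d v := by
  simp only [add_mul, mul_add, Matrix.add_apply, Matrix.mul_diagonal, Matrix.diagonal_mul,
    Matrix.diagonal_mul_diagonal, Matrix.diagonal_apply_ne _ huv.ne, adjMatrix_apply, if_pos huv]
  ring

theorem _root_.CondSTZ.adjMatrix_mul_self_sum_cycle_eq_zero (hG : CondSTZ G) {a b c e : V}
    (hab : G.Adj a b) (hbc : G.Adj b c) (hce : G.Adj c e) (hea : G.Adj e a) :
    (G.adjMatrix (ZMod 2) * G.adjMatrix (ZMod 2)) a b +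
      (G.adjMatrix (ZMod 2) * G.adjMatrix (ZMod 2)) b c +
      (G.adjMatrix (ZMod 2) * G.adjMatrix (ZMod 2)) c e +
      (G.adjMatrix (ZMod 2) * G.adjMatrix (ZMod 2)) e a = 0 := by
  obtain ⟨d, hd⟩ := hG
  rw [adjMat2_eq_adjMatrix] at hd
  have edge : ∀ {u v}, G.Adj u v →
      (G.adjMatrix (ZMod 2) * G.adjMatrix (ZMod 2)) u v + d u + d v = 1 := fun huv => by
    rw [← mul_self_adjMatrix_add_diagonal_apply_of_adj d huv, hd]
    simp [huv, huv.ne]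
  linear_combination (norm := ring_nf) edge hab + edge hbc + edge hce + edge hea
  reduce_mod_char

end SimpleGraph

/-- `G10` is connected, has all degrees even, satisfies C2 and B3, but fails the STZ
condition. -/
theorem G10_counterexample :
    G10.Connected ∧ CondC1 G10 ∧ CondC2 G10 ∧ CondB3 G10 ∧ ¬ CondSTZ G10 := by
  refine ⟨SimpleGraph.connected_of_forall_reachable_in_two_steps 1 (by decide),
    SimpleGraph.condC1_iff.2 (by decide), SimpleGraph.condC2_iff.2 (by decide),
    SimpleGraph.condB3_iff.2 (by decide), fun hSTZ => ?_⟩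
  have := hSTZ.adjMatrix_mul_self_sum_cycle_eq_zero (a := 1) (b := 3) (c := 9) (e := 7)
    (by decide) (by decide) (by decide) (by decide)
  exact absurd this (by decide)
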